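/- arXiv:2208.13359 — 2 statements merged into one kernel-verified Lean document; each statement's English description precedes it below -/
import Mathlib

section
/- Let A ≠ 0, B < 0, D₁ be real constants. On an interval where cos(√(-B)(Ax + D₁)) ≠ 0, the function t(x) = √(-B)·tan(√(-B)(Ax + D₁)) satisfies t'(x) = A·(t(x)² - B). -/
open Real

theorem Real.hasDerivAt_tan_eq_one_add_tan_sq {x : ℝ} (h : cos x ≠ 0) :
    HasDerivAt tan (1 + tan x ^ 2) x := by
  convert hasDerivAt_tan h using 1
  rw [one_div, ← inv_one_add_tan_sq h, inv_inv]

theorem hasDerivAt_mul_tan_mul_affine (k A D x : ℝ) (h : cos (k * (A * x + D)) ≠ 0) :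
    HasDerivAt (fun x ↦ k * tan (k * (A * x + D)))
      (A * ((k * tan (k * (A * x + D))) ^ 2 + k ^ 2)) x := by
  have hinner : HasDerivAt (fun x ↦ k * (A * x + D)) (k * A) x := by
    simpa using (((hasDerivAt_id x).const_mul A).add_const D).const_mul k
  refine (((hasDerivAt_tan_eq_one_add_tan_sq h).comp x hinner).const_mul k).congr_deriv ?_
  ring

theorem ode_case_B_neg_general (A B D₁ : ℝ) (hB : B < 0) :
    ∀ x : ℝ, Real.cos (Real.sqrt (-B) * (A * x + D₁)) ≠ 0 →
      HasDerivAt (fun x : ℝ =>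
          Real.sqrt (-B) * Real.tan (Real.sqrt (-B) * (A * x + D₁)))
        (A * ((Real.sqrt (-B) * Real.tan (Real.sqrt (-B) * (A * x + D₁))) ^ 2 - B)) x := by
  intro x hcos
  have hsq : √(-B) ^ 2 = -B := sq_sqrt (neg_nonneg.mpr hB.le)
  simpa only [hsq, ← sub_eq_add_neg] using hasDerivAt_mul_tan_mul_affine (√(-B)) A D₁ x hcos

theorem ode_case_B_neg (A B D₁ : ℝ) (hA : A ≠ 0) (hB : B < 0) :
    ∀ x : ℝ, Real.cos (Real.sqrt (-B) * (A * x + D₁)) ≠ 0 →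
      HasDerivAt (fun x : ℝ =>
          Real.sqrt (-B) * Real.tan (Real.sqrt (-B) * (A * x + D₁)))
        (A * ((Real.sqrt (-B) * Real.tan (Real.sqrt (-B) * (A * x + D₁))) ^ 2 - B)) x :=
  ode_case_B_neg_general A B D₁ hB
end

section
/- Let p > 0 be differentiable, H, K differentiable functions of x with H² - K + c > 0, e^u = 4p, and suppose there exists A ≠ 0 such that e^u √(H²-K+c) = e^{A x + A₂} along a trajectory where K satisfies x = (1/2)ln[(K₁-K)^σ(K-K₂)^β(K+K₁+K₂)^γ] + c₁ with σβγ as usual. If additionally H is constant, then H² = (e^{2A₂}/(16p²))·[(K₁-K)^σ(K-K₂)^β(K+K₁+K₂)^γ]^A + K - c for all K in the range, which is impossible for a constant H since the right-hand side is a nonconstant function of K. Conclude: the mean curvature H of a Weingarten HCMU surface without umbilical points in Q³_c is not constant. -/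
/-!
Since `p` is a third of the product of the linear factors `K₁ - K`, `K - K₂`, `K + K₁ + K₂`, the
hypothesis says that `H² + c - K` is a constant times the product of these factors raised to the
powers `Aσ - 2`, `Aβ - 2`, `Aγ - 2`. Differentiating its logarithm gives a polynomial identity of
degree three in `K` whose `K³`-coefficient is the sum of the exponents minus one,
`A (σ + β + γ) - 7 = -7`. A cubic with nonzero leading coefficient cannot vanish on an interval:
its third finite difference is a nonzero constant.
-/

open Real Set Filter Topology

lemma exponents_sum_eq_zero {K₁ K₂ : ℝ} (h₁₂ : K₁ ≠ K₂) (h₁ : K₂ + 2 * K₁ ≠ 0)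
    (h₂ : 2 * K₂ + K₁ ≠ 0) :
    -3 / ((K₁ - K₂) * (K₂ + 2 * K₁)) + -3 / ((K₂ - K₁) * (2 * K₂ + K₁))
      + -3 / ((K₂ + 2 * K₁) * (2 * K₂ + K₁)) = 0 := by
  have h₁₂' : K₁ - K₂ ≠ 0 := sub_ne_zero.mpr h₁₂
  have h₂₁ : K₂ - K₁ ≠ 0 := sub_ne_zero.mpr h₁₂.symm
  rw [div_add_div _ _ (mul_ne_zero h₁₂' h₁) (mul_ne_zero h₂₁ h₂),
    div_add_div _ _ (by positivity) (mul_ne_zero h₁ h₂), div_eq_zero_iff]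
  left
  ring

lemma div_sq_mul_rpow_eq {u v w : ℝ} (hu : 0 < u) (hv : 0 < v) (hw : 0 < w) (κ σ β γ A : ℝ) :
    κ / (16 * (u * v * w / 3) ^ 2) * (u ^ σ * v ^ β * w ^ γ) ^ A
      = 9 * κ / 16 * u ^ (A * σ - 2) * v ^ (A * β - 2) * w ^ (A * γ - 2) := by
  rw [mul_rpow (by positivity) (by positivity), mul_rpow (by positivity) (by positivity),
    ← rpow_mul hu.le, ← rpow_mul hv.le, ← rpow_mul hw.le,
    rpow_sub hu, rpow_sub hv, rpow_sub hw, rpow_two, rpow_two, rpow_two]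
  field_simp
  ring

lemma cubic_identity_of_eq_mul_rpow {l r a b d D C e₁ e₂ e₃ : ℝ} (hC : 0 < C)
    (hpos : ∀ y ∈ Ioo l r, 0 < a - y ∧ 0 < y - b ∧ 0 < y + d)
    (h : ∀ y ∈ Ioo l r, D - y = C * (a - y) ^ e₁ * (y - b) ^ e₂ * (y + d) ^ e₃) :
    ∀ x ∈ Ioo l r, (a - x) * (x - b) * (x + d)
      = (D - x) * (e₁ * (x - b) * (x + d) - e₂ * (a - x) * (x + d) - e₃ * (a - x) * (x - b)) := by
  intro x hx
  have hlog : ∀ y ∈ Ioo l r, log (D - y) - e₁ * log (a - y) - e₂ * log (y - b)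
      - e₃ * log (y + d) = log C := by
    intro y hy
    obtain ⟨hu, hv, hw⟩ := hpos y hy
    rw [h y hy, log_mul (by positivity) (by positivity), log_mul (by positivity) (by positivity),
      log_mul (by positivity) (by positivity), log_rpow hu, log_rpow hv, log_rpow hw]
    ring
  obtain ⟨hu, hv, hw⟩ := hpos x hx
  have hD : 0 < D - x := by rw [h x hx]; positivity
  have hderiv := (((((hasDerivAt_id x).const_sub D).log hD.ne').sub
    ((((hasDerivAt_id x).const_sub a).log hu.ne').const_mul e₁)).sub
    ((((hasDerivAt_id x).sub_const b).log hv.ne').const_mul e₂)).sub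
    ((((hasDerivAt_id x).add_const d).log hw.ne').const_mul e₃)
  have hzero := hderiv.unique <| (hasDerivAt_const x (log C)).congr_of_eventuallyEq <|
    eventually_of_mem (Ioo_mem_nhds hx.1 hx.2) hlog
  simp only [id] at hzero
  field_simp at hzero
  linear_combination -hzero

lemma sum_eq_one_of_cubic_identity {l r a b d D e₁ e₂ e₃ : ℝ} (hlr : l < r)
    (h : ∀ x ∈ Ioo l r, (a - x) * (x - b) * (x + d)
      = (D - x) * (e₁ * (x - b) * (x + d) - e₂ * (a - x) * (x + d) - e₃ * (a - x) * (x - b))) :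
    e₁ + e₂ + e₃ = 1 := by
  set s := (r - l) / 5 with hs_def
  have hs : 0 < s := by positivity
  have mem : ∀ i : ℝ, 1 ≤ i → i ≤ 4 → l + i * s ∈ Ioo l r := fun i h₁ h₄ =>
    ⟨by nlinarith, by nlinarith⟩
  have h₁ := h _ (mem 1 (by norm_num) (by norm_num))
  have h₂ := h _ (mem 2 (by norm_num) (by norm_num))
  have h₃ := h _ (mem 3 (by norm_num) (by norm_num))
  have h₄ := h _ (mem 4 (by norm_num) (by norm_num))
  have hdiff : 6 * s ^ 3 * (e₁ + e₂ + e₃ - 1) = 0 := by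
    linear_combination h₄ - 3 * h₃ + 3 * h₂ - h₁
  have := (mul_eq_zero.mp hdiff).resolve_left (by positivity)
  linarith

theorem mean_curvature_not_constant_general (K₁ K₂ c A A₂ H : ℝ)
    (h2 : K₁ > K₂) (h3 : K₂ > -(K₁ + K₂))
    (p : ℝ → ℝ) (hp : ∀ K, p K = -(1/3) * (K - K₁) * (K - K₂) * (K + K₁ + K₂))
    (σ β γ : ℝ)
    (hσ : σ = -3 / ((K₁ - K₂) * (K₂ + 2 * K₁)))
    (hβ : β = -3 / ((K₂ - K₁) * (2 * K₂ + K₁)))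
    (hγ : γ = -3 / ((K₂ + 2 * K₁) * (2 * K₂ + K₁)))
    (Φ : ℝ → ℝ)
    (hΦ : ∀ K, Φ K = (K₁ - K) ^ σ * (K - K₂) ^ β * (K + K₁ + K₂) ^ γ)
    (heq : ∀ K ∈ Set.Ioo K₂ K₁,
      H ^ 2 - K + c = Real.exp (2 * A₂) / (16 * (p K) ^ 2) * (Φ K) ^ A) :
    False := by
  have hsum : σ + β + γ = 0 := by
    rw [hσ, hβ, hγ]
    exact exponents_sum_eq_zero h2.ne' (by linarith) (by linarith)
  have hpos : ∀ y ∈ Ioo K₂ K₁, 0 < K₁ - y ∧ 0 < y - K₂ ∧ 0 < y + (K₁ + K₂) := fun y hy =>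
    ⟨by linarith [hy.2], by linarith [hy.1], by linarith [hy.1]⟩
  have hform : ∀ y ∈ Ioo K₂ K₁, H ^ 2 + c - y = 9 * exp (2 * A₂) / 16
      * (K₁ - y) ^ (A * σ - 2) * (y - K₂) ^ (A * β - 2) * (y + (K₁ + K₂)) ^ (A * γ - 2) := by
    intro y hy
    obtain ⟨hu, hv, hw⟩ := hpos y hy
    have hpy : p y = (K₁ - y) * (y - K₂) * (y + K₁ + K₂) / 3 := by rw [hp]; ring
    rw [← add_assoc] at hw ⊢
    rw [← div_sq_mul_rpow_eq hu hv hw, ← hpy, ← hΦ]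
    linarith [heq y hy]
  have hexp := sum_eq_one_of_cubic_identity h2
    (cubic_identity_of_eq_mul_rpow (by positivity) hpos hform)
  have : (-6 : ℝ) = 1 := by linear_combination hexp - A * hsum
  norm_num at this

theorem mean_curvature_not_constant (K₁ K₂ c A A₂ H : ℝ)
    (h1 : K₁ > 0) (h2 : K₁ > K₂) (h3 : K₂ > -(K₁ + K₂)) (hA : A ≠ 0)
    (p : ℝ → ℝ) (hp : ∀ K, p K = -(1/3) * (K - K₁) * (K - K₂) * (K + K₁ + K₂))
    (σ β γ : ℝ)
    (hσ : σ = -3 / ((K₁ - K₂) * (K₂ + 2 * K₁)))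
    (hβ : β = -3 / ((K₂ - K₁) * (2 * K₂ + K₁)))
    (hγ : γ = -3 / ((K₂ + 2 * K₁) * (2 * K₂ + K₁)))
    (Φ : ℝ → ℝ)
    (hΦ : ∀ K, Φ K = (K₁ - K) ^ σ * (K - K₂) ^ β * (K + K₁ + K₂) ^ γ)
    (heq : ∀ K ∈ Set.Ioo K₂ K₁,
      H ^ 2 - K + c = Real.exp (2 * A₂) / (16 * (p K) ^ 2) * (Φ K) ^ A) :
    False :=
  mean_curvature_not_constant_general K₁ K₂ c A A₂ H h2 h3 p hp σ β γ hσ hβ hγ Φ hΦ heq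
end
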